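/- arXiv:1601.04680 — 7 statements merged into one kernel-verified Lean document; each statement's English description precedes it below -/
import Mathlib

section
/- Let 1 < β₂ < β₁, and let ω ∈ {0,...,α}^ℕ be a sequence with Π_{β₂}(ω) < 1, where Π_β(ω) = Σ_{j≥1} ω_j β^{-j}. Then there exists δ > 0, depending only on β₁, β₂ and α (not on ω), such that Π_{β₁}(ω) ≤ 1 − δ. -/
lemma mySummable (β : ℝ) (hβ : 1 < β) (α : ℕ) (ω : ℕ → ℕ) (hω : ∀ j, ω j ≤ α) :
    Summable (fun j : ℕ => (ω j : ℝ) / β ^ (j + 1)) := by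
  have hβ0 : (0:ℝ) < β := by linarith
  have hinv : (1/β) < 1 := by rw [div_lt_one hβ0]; exact hβ
  have hinv0 : (0:ℝ) ≤ 1/β := by positivity
  have hg : Summable (fun j : ℕ => ((α:ℝ)/β) * (1/β)^j) :=
    (summable_geometric_of_lt_one hinv0 hinv).mul_left _
  refine Summable.of_nonneg_of_le (fun j => by positivity) (fun j => ?_) hg
  have hp : (0:ℝ) < β ^ (j+1) := by positivity
  rw [div_le_iff₀ hp]
  have : ((α:ℝ)/β) * (1/β)^j * β^(j+1) = (α:ℝ) := by
    field_simp
    rw [one_div, inv_pow, pow_succ, ← mul_assoc, mul_assoc (α:ℝ), inv_mul_cancel₀ (pow_ne_zero j hβ0.ne'), mul_one]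
  rw [this]
  exact_mod_cast hω j

/-- If `β₂ < β₁` then there is a `δ > 0`, depending only on `β₁, β₂, α`, such that
`Π_{β₂}(ω) < 1` implies `Π_{β₁}(ω) ≤ 1 - δ` for every digit sequence `ω` over `{0,...,α}`. -/
theorem stmt1 (α : ℕ) (hα : 1 ≤ α) (β₁ β₂ : ℝ) (h2 : 1 < β₂) (h12 : β₂ < β₁) :
    ∃ δ : ℝ, 0 < δ ∧ ∀ ω : ℕ → ℕ, (∀ j, ω j ≤ α) →
      (∑' j : ℕ, (ω j : ℝ) / β₂ ^ (j + 1)) < 1 →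
      (∑' j : ℕ, (ω j : ℝ) / β₁ ^ (j + 1)) ≤ 1 - δ := by
  have hb1 : (1:ℝ) < β₁ := h2.trans h12
  set r := β₂ / β₁ with hr
  have hb10 : (0:ℝ) < β₁ := by linarith
  have hr0 : 0 < r := div_pos (by linarith) hb10
  have hr1 : r < 1 := (div_lt_one hb10).mpr h12
  refine ⟨1 - r, by linarith, fun ω hω hsum => ?_⟩
  have hS2 := mySummable β₂ h2 α ω hω
  have hS1 := mySummable β₁ hb1 α ω hω
  have key : ∀ j : ℕ, (ω j : ℝ) / β₁ ^ (j+1) ≤ r * ((ω j : ℝ) / β₂ ^ (j+1)) := by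
    intro j
    have hpow : r ^ (j+1) ≤ r := by
      calc r ^ (j+1) ≤ r ^ 1 := pow_le_pow_of_le_one hr0.le hr1.le (by omega)
        _ = r := pow_one r
    have heq : (ω j : ℝ) / β₁ ^ (j+1) = ((ω j : ℝ) / β₂ ^ (j+1)) * r ^ (j+1) := by
      rw [hr, div_pow]
      field_simp
    rw [heq]
    calc ((ω j : ℝ) / β₂ ^ (j+1)) * r ^ (j+1)
        ≤ ((ω j : ℝ) / β₂ ^ (j+1)) * r :=
          mul_le_mul_of_nonneg_left hpow (by positivity)
      _ = r * ((ω j : ℝ) / β₂ ^ (j+1)) := mul_comm _ _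
  calc (∑' j : ℕ, (ω j : ℝ) / β₁ ^ (j + 1))
      ≤ (∑' j : ℕ, r * ((ω j : ℝ) / β₂ ^ (j + 1))) :=
        Summable.tsum_le_tsum key hS1 (hS2.mul_left r)
    _ = r * (∑' j : ℕ, (ω j : ℝ) / β₂ ^ (j + 1)) := tsum_mul_left
    _ ≤ r * 1 := mul_le_mul_of_nonneg_left hsum.le hr0.le
    _ = 1 - (1 - r) := by ring
end

section
/- Suppose ω, η ∈ {0,...,α}^ℕ satisfy ω₁ > η₁, Σ_{j≥2} (α−ω_j) β^{-j} < β^{-1}, and Σ_{j≥2} η_j β^{-j} < β^{-1}, where 1 < β < α+1. Then Π_β(ω) − Π_β(η) > (α+1−β)/(β(β−1)) > 0. -/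
/-- Key lower-bound step of bi-Lipschitz estimate: if `ω₁ > η₁`,
`Σ_{j≥2} (α-ω_j)β^{-j} < β⁻¹` and `Σ_{j≥2} η_j β^{-j} < β⁻¹`, then
`Π_β(ω) - Π_β(η) > (α+1-β)/(β(β-1)) > 0`.  Here `ω j` denotes the digit `ω_{j+1}`. -/
theorem stmt3 (α : ℕ) (hα : 1 ≤ α) (β : ℝ) (hβ1 : 1 < β) (hβ2 : β < α + 1)
    (ω η : ℕ → ℕ) (hω : ∀ j, ω j ≤ α) (hη : ∀ j, η j ≤ α)
    (hfirst : η 0 < ω 0)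
    (h1 : (∑' j : ℕ, ((α : ℝ) - ω (j + 1)) / β ^ (j + 2)) < β⁻¹)
    (h2 : (∑' j : ℕ, (η (j + 1) : ℝ) / β ^ (j + 2)) < β⁻¹) :
    ((α : ℝ) + 1 - β) / (β * (β - 1)) <
      (∑' j : ℕ, (ω j : ℝ) / β ^ (j + 1)) - (∑' j : ℕ, (η j : ℝ) / β ^ (j + 1)) ∧
    0 < ((α : ℝ) + 1 - β) / (β * (β - 1)) := by
  have hβ0 : (0 : ℝ) < β := by linarith
  have hinv : β⁻¹ < 1 := by
    rw [inv_lt_one_iff₀]; right; exact hβ1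
  have hinv0 : (0 : ℝ) ≤ β⁻¹ := by positivity
  have hgeo : Summable (fun j : ℕ => (β⁻¹) ^ j) :=
    summable_geometric_of_lt_one hinv0 hinv
  -- generic summability for sequences bounded by α
  have key : ∀ (f : ℕ → ℝ) (k : ℕ), (∀ j, 0 ≤ f j) → (∀ j, f j ≤ α) →
      Summable (fun j : ℕ => f j / β ^ (j + k)) := by
    intro f k hf0 hfα
    apply Summable.of_nonneg_of_le (fun j => div_nonneg (hf0 j) (by positivity))
      (fun j => ?_) (hgeo.mul_left (α : ℝ))
    have hpow : (β : ℝ) ^ j ≤ β ^ (j + k) :=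
      pow_le_pow_right₀ (le_of_lt hβ1) (Nat.le_add_right j k)
    calc f j / β ^ (j + k) ≤ (α : ℝ) / β ^ j := by
          apply div_le_div₀ (by positivity) (hfα j) (by positivity) hpow
      _ = (α : ℝ) * (β⁻¹) ^ j := by
          rw [div_eq_mul_inv, inv_pow]
  have hsω : Summable (fun j : ℕ => (ω j : ℝ) / β ^ (j + 1)) :=
    key _ 1 (fun j => by positivity) (fun j => by exact_mod_cast hω j)
  have hsη : Summable (fun j : ℕ => (η j : ℝ) / β ^ (j + 1)) :=
    key _ 1 (fun j => by positivity) (fun j => by exact_mod_cast hη j)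
  have hsωt : Summable (fun j : ℕ => (ω (j + 1) : ℝ) / β ^ (j + 2)) :=
    key _ 2 (fun j => by positivity) (fun j => by exact_mod_cast hω (j + 1))
  have hsηt : Summable (fun j : ℕ => (η (j + 1) : ℝ) / β ^ (j + 2)) :=
    key _ 2 (fun j => by positivity) (fun j => by exact_mod_cast hη (j + 1))
  have hsc : Summable (fun j : ℕ => ((α : ℝ) - ω (j + 1)) / β ^ (j + 2)) :=
    key _ 2 (fun j => by
        have := hω (j + 1)
        have : (ω (j+1) : ℝ) ≤ α := by exact_mod_cast this
        linarith)
      (fun j => by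
        have : (0:ℝ) ≤ (ω (j+1) : ℝ) := by positivity
        linarith)
  -- value of constant series
  have hS : (∑' j : ℕ, (α : ℝ) / β ^ (j + 2)) = (α : ℝ) / (β * (β - 1)) := by
    have : (fun j : ℕ => (α : ℝ) / β ^ (j + 2))
        = fun j : ℕ => ((α : ℝ) / β ^ 2) * (β⁻¹) ^ j := by
      funext j
      rw [div_eq_mul_inv, div_eq_mul_inv, mul_assoc, ← inv_pow, ← inv_pow,
        ← pow_add]
      ring_nf
    rw [this, tsum_mul_left, tsum_geometric_of_lt_one hinv0 hinv]
    have hβn : β ≠ 0 := ne_of_gt hβ0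
    have hβm : β - 1 ≠ 0 := sub_ne_zero.mpr (by linarith)
    have h1' : (1 : ℝ) - β⁻¹ = (β - 1) / β := by field_simp
    rw [h1', inv_div]
    field_simp
  have hsS : Summable (fun j : ℕ => (α : ℝ) / β ^ (j + 2)) :=
    key _ 2 (fun j => by positivity) (fun j => le_refl _)
  -- tail of ω
  have hTω : (∑' j : ℕ, (ω (j + 1) : ℝ) / β ^ (j + 2))
      = (∑' j : ℕ, (α : ℝ) / β ^ (j + 2))
        - (∑' j : ℕ, ((α : ℝ) - ω (j + 1)) / β ^ (j + 2)) := by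
    rw [← Summable.tsum_sub hsS hsc]
    congr 1; funext j; ring
  -- split first terms
  have hA : (∑' j : ℕ, (ω j : ℝ) / β ^ (j + 1))
      = (ω 0 : ℝ) / β + ∑' j : ℕ, (ω (j + 1) : ℝ) / β ^ (j + 2) := by
    rw [Summable.tsum_eq_zero_add hsω]; norm_num
  have hB : (∑' j : ℕ, (η j : ℝ) / β ^ (j + 1))
      = (η 0 : ℝ) / β + ∑' j : ℕ, (η (j + 1) : ℝ) / β ^ (j + 2) := by
    rw [Summable.tsum_eq_zero_add hsη]; norm_num
  have hU0 : (0 : ℝ) ≤ ∑' j : ℕ, (η (j + 1) : ℝ) / β ^ (j + 2) :=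
    tsum_nonneg fun j => by positivity
  have hfirst' : (η 0 : ℝ) + 1 ≤ ω 0 := by exact_mod_cast hfirst
  constructor
  · have heq : ((α : ℝ) + 1 - β) / (β * (β - 1))
        = (α : ℝ) / (β * (β - 1)) - β⁻¹ := by
      have hβn : β ≠ 0 := ne_of_gt hβ0
      have hβm : β - 1 ≠ 0 := sub_ne_zero.mpr (by linarith)
      field_simp
      ring
    rw [hA, hB, hTω, hS, heq]
    have h3 : (1 : ℝ) / β ≤ (ω 0 : ℝ) / β - (η 0 : ℝ) / β := by
      rw [div_sub_div_same]
      gcongr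
      linarith
    have hβinv : (1 : ℝ) / β = β⁻¹ := one_div β
    nlinarith [h1, h2, h3]
  · apply div_pos (by linarith) (by nlinarith)
end

section
/- Define a binary tree of positive integers by a_1 = 1, a_2 = 2, and a_{i₁,...,i_n,j} = j · a_{i₁,...,i_n} for j ∈ {1,2}. Set σ_{i₁,...,i_n} = 1 + a_{i₁} + a_{i₁,i₂} + ⋯ + a_{i₁,...,i_n}. Then for every constant 0 < γ < 1, the sums S_n = Σ_{i₁,...,i_n ∈ {1,2}} γ^{σ_{i₁,...,i_n}} converge to 0 as n → ∞. -/
/-- `a_{i₁,...,i_n}` is the product of the entries (since `a_{i₁}=i₁` and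
`a_{w,j}=j·a_w`); `treeSigma w = σ_w = 1 + Σ_k a_{i₁,...,i_k}` sums `a` over all
nonempty prefixes.  Words are lists over `{1,2}`, encoded as `Fin 2` via `i ↦ i+1`. -/
def treeSigma (n : ℕ) (f : Fin n → Fin 2) : ℕ :=
  1 + ∑ k : Fin n, ∏ j : Fin n, if (j : ℕ) ≤ (k : ℕ) then ((f j : ℕ) + 1) else 1

lemma treeSigma_succ (n : ℕ) (f : Fin (n + 1) → Fin 2) :
    treeSigma (n + 1) f = 1 + ((f 0 : ℕ) + 1) * treeSigma n (fun i => f i.succ) := by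
  unfold treeSigma
  congr 1
  rw [Fin.sum_univ_succ]
  have h0 : (∏ j : Fin (n + 1), if (j : ℕ) ≤ ((0 : Fin (n + 1)) : ℕ) then ((f j : ℕ) + 1) else 1)
      = (f 0 : ℕ) + 1 := by
    rw [Fin.prod_univ_succ]
    simp
  have h1 : ∀ k : Fin n,
      (∏ j : Fin (n + 1), if (j : ℕ) ≤ ((k.succ : Fin (n + 1)) : ℕ) then ((f j : ℕ) + 1) else 1)
      = ((f 0 : ℕ) + 1) * ∏ j : Fin n, if (j : ℕ) ≤ (k : ℕ) then ((f j.succ : ℕ) + 1) else 1 := by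
    intro k
    rw [Fin.prod_univ_succ]
    simp
  rw [h0, Finset.sum_congr rfl (fun k _ => h1 k), ← Finset.mul_sum]
  ring

lemma treeSigma_ge (n : ℕ) (f : Fin n → Fin 2) : n + 1 ≤ treeSigma n f := by
  unfold treeSigma
  have h : ∀ k : Fin n,
      1 ≤ ∏ j : Fin n, if (j : ℕ) ≤ (k : ℕ) then ((f j : ℕ) + 1) else 1 := by
    intro k
    apply Finset.one_le_prod'
    intro j _
    split <;> omega
  have := Finset.card_nsmul_le_sum Finset.univ _ 1 (fun k _ => h k)
  simp only [Finset.card_univ, Fintype.card_fin, smul_eq_mul, mul_one] at this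
  omega

noncomputable def S (γ : ℝ) (n : ℕ) : ℝ := ∑ f : Fin n → Fin 2, γ ^ treeSigma n f

lemma S_nonneg (γ : ℝ) (h0 : 0 ≤ γ) (n : ℕ) : 0 ≤ S γ n :=
  Finset.sum_nonneg fun f _ => pow_nonneg h0 _

lemma S_rec (γ : ℝ) (n : ℕ) : S γ (n + 1) = γ * (S γ n + S (γ ^ 2) n) := by
  unfold S
  rw [← Fintype.sum_equiv (Fin.consEquiv fun _ : Fin (n + 1) => Fin 2)
      (fun p => γ ^ treeSigma (n + 1) (Fin.consEquiv _ p)) (fun f => γ ^ treeSigma (n + 1) f)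
      (fun p => rfl)]
  rw [Fintype.sum_prod_type, Fin.sum_univ_two]
  have key : ∀ (i : Fin 2) (g : Fin n → Fin 2),
      γ ^ treeSigma (n + 1) (Fin.consEquiv (fun _ => Fin 2) (i, g))
      = γ * (γ ^ ((i : ℕ) + 1)) ^ treeSigma n g := by
    intro i g
    have hf : (Fin.consEquiv (fun _ : Fin (n + 1) => Fin 2) (i, g)) = Fin.cons i g := rfl
    rw [hf, treeSigma_succ]
    have : (fun j : Fin n => (Fin.cons i g : Fin (n+1) → Fin 2) j.succ) = g := by
      funext j; simp
    rw [this, Fin.cons_zero, pow_add, pow_mul, pow_one]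
  simp only [key]
  rw [← Finset.mul_sum, ← Finset.mul_sum]
  have h0 : ((0 : Fin 2) : ℕ) = 0 := rfl
  have h1 : ((1 : Fin 2) : ℕ) = 1 := rfl
  rw [h0, h1]
  norm_num
  ring

lemma S_le (γ : ℝ) (h0 : 0 ≤ γ) (h1 : γ ≤ 1) (n : ℕ) : S γ n ≤ 2 ^ n * γ ^ (n + 1) := by
  unfold S
  calc ∑ f : Fin n → Fin 2, γ ^ treeSigma n f
      ≤ ∑ _f : Fin n → Fin 2, γ ^ (n + 1) := by
        apply Finset.sum_le_sum
        intro f _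
        exact pow_le_pow_of_le_one h0 h1 (treeSigma_ge n f)
    _ = 2 ^ n * γ ^ (n + 1) := by
        rw [Finset.sum_const, Finset.card_univ]
        simp [Fintype.card_fun]

lemma tendsto_base (γ : ℝ) (h0 : 0 < γ) (h1 : γ < 1 / 2) :
    Filter.Tendsto (S γ) Filter.atTop (nhds 0) := by
  have hb : Filter.Tendsto (fun n : ℕ => 2 ^ n * γ ^ (n + 1)) Filter.atTop (nhds 0) := by
    have : ∀ n : ℕ, 2 ^ n * γ ^ (n + 1) = γ * (2 * γ) ^ n := by
      intro n; rw [mul_pow, pow_succ]; ring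
    simp only [this]
    rw [show (0 : ℝ) = γ * 0 by ring]
    exact (tendsto_pow_atTop_nhds_zero_of_lt_one (by positivity) (by linarith)).const_mul γ
  refine squeeze_zero (fun n => S_nonneg γ h0.le n) (fun n => S_le γ h0.le (by linarith) n) hb

lemma contraction (x ε : ℕ → ℝ) (γ : ℝ) (hγ0 : 0 ≤ γ) (hγ1 : γ < 1)
    (hx : ∀ n, 0 ≤ x n) (hε : Filter.Tendsto ε Filter.atTop (nhds 0))
    (hεpos : ∀ n, 0 ≤ ε n)
    (hrec : ∀ n, x (n + 1) ≤ γ * x n + ε n) :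
    Filter.Tendsto x Filter.atTop (nhds 0) := by
  rw [Metric.tendsto_atTop]
  intro δ hδ
  have hδ2 : 0 < δ * (1 - γ) / 2 := by
    have : 0 < 1 - γ := by linarith
    positivity
  obtain ⟨N, hN⟩ := (Metric.tendsto_atTop.1 hε) (δ * (1 - γ) / 2) hδ2
  have hεsmall : ∀ n ≥ N, ε n ≤ δ * (1 - γ) / 2 := by
    intro n hn
    have := hN n hn
    rw [Real.dist_eq, sub_zero, abs_of_nonneg (hεpos n)] at this
    linarith
  -- x (N + m) ≤ γ ^ m * x N + δ / 2
  have key : ∀ m, x (N + m) ≤ γ ^ m * x N + δ / 2 := by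
    intro m
    induction m with
    | zero => simp; linarith [hx N]
    | succ m ih =>
      have h1 := hrec (N + m)
      have h2 := hεsmall (N + m) (Nat.le_add_right N m)
      have h3 : γ * x (N + m) ≤ γ * (γ ^ m * x N + δ / 2) :=
        mul_le_mul_of_nonneg_left ih hγ0
      have : x (N + m + 1) ≤ γ ^ (m + 1) * x N + γ * (δ / 2) + δ * (1 - γ) / 2 := by
        rw [pow_succ]
        nlinarith
      have h4 : γ * (δ / 2) + δ * (1 - γ) / 2 ≤ δ / 2 := by nlinarith
      have heq : N + (m + 1) = N + m + 1 := by omega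
      rw [heq]
      linarith
  -- choose M with γ ^ M * x N < δ / 2
  have hpow : Filter.Tendsto (fun m : ℕ => γ ^ m * x N) Filter.atTop (nhds 0) := by
    rw [show (0 : ℝ) = 0 * x N by ring]
    exact (tendsto_pow_atTop_nhds_zero_of_lt_one hγ0 hγ1).mul_const (x N)
  obtain ⟨M, hM⟩ := (Metric.tendsto_atTop.1 hpow) (δ / 2) (by linarith)
  refine ⟨N + M, fun n hn => ?_⟩
  have hm : ∃ m, n = N + m ∧ M ≤ m := ⟨n - N, by omega, by omega⟩
  obtain ⟨m, rfl, hMm⟩ := hm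
  have h5 := hM m hMm
  rw [Real.dist_eq, sub_zero, abs_of_nonneg (mul_nonneg (pow_nonneg hγ0 m) (hx N))] at h5
  rw [Real.dist_eq, sub_zero, abs_of_nonneg (hx _)]
  have := key m
  linarith

lemma main_ind (j : ℕ) : ∀ γ : ℝ, 0 < γ → γ < 1 → γ ^ (2 ^ j) < 1 / 2 →
    Filter.Tendsto (S γ) Filter.atTop (nhds 0) := by
  induction j with
  | zero =>
    intro γ h0 h1 h2
    simp only [pow_zero, pow_one] at h2
    exact tendsto_base γ h0 h2
  | succ j ih =>
    intro γ h0 h1 h2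
    have hsq : (γ ^ 2) ^ (2 ^ j) < 1 / 2 := by
      rw [← pow_mul]
      have : 2 * 2 ^ j = 2 ^ (j + 1) := by rw [pow_succ]; ring
      rw [this]
      exact h2
    have hsq0 : 0 < γ ^ 2 := by positivity
    have hsq1 : γ ^ 2 < 1 := by nlinarith
    have htail := ih (γ ^ 2) hsq0 hsq1 hsq
    have hε : Filter.Tendsto (fun n => γ * S (γ ^ 2) n) Filter.atTop (nhds 0) := by
      rw [show (0 : ℝ) = γ * 0 by ring]
      exact htail.const_mul γ
    apply contraction (S γ) (fun n => γ * S (γ ^ 2) n) γ h0.le h1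
      (S_nonneg γ h0.le) hε
      (fun n => mul_nonneg h0.le (S_nonneg _ (by positivity) n))
    intro n
    rw [S_rec]
    exact le_of_eq (by ring)

/-- The sums `S_n = Σ_{i₁,...,i_n ∈ {1,2}} γ^{σ_{i₁,...,i_n}}` tend to `0`. -/
theorem stmt5 (γ : ℝ) (h0 : 0 < γ) (h1 : γ < 1) :
    Filter.Tendsto (fun n : ℕ => ∑ f : Fin n → Fin 2, γ ^ treeSigma n f)
      Filter.atTop (nhds 0) := by
  have : ∃ j : ℕ, γ ^ (2 ^ j) < 1 / 2 := by
    obtain ⟨j, hj⟩ := (Metric.tendsto_atTop.1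
      (tendsto_pow_atTop_nhds_zero_of_lt_one h0.le h1)) (1 / 2) (by norm_num)
    refine ⟨j, ?_⟩
    have h2j : j ≤ 2 ^ j := (Nat.lt_two_pow_self (n := j)) |>.le
    have := hj j le_rfl
    rw [Real.dist_eq, sub_zero, abs_of_nonneg (by positivity)] at this
    calc γ ^ (2 ^ j) ≤ γ ^ j := pow_le_pow_of_le_one h0.le h1.le h2j
      _ < 1 / 2 := this
  obtain ⟨j, hj⟩ := this
  exact main_ind j γ h0 h1 hj
end

section
/- Let d = (d_i) ∈ {0,...,α}^ℕ and let M = (m_k)_{k∈ℕ} be a sequence of positive integers with d_{m_k} > 0 for every k. Define ω(M) to be the infinite concatenation d₁⋯d_{m₁}⁻ d₁⋯d_{m₂}⁻ ⋯, where d₁⋯d_m⁻ means the word d₁⋯d_m with its last digit decreased by 1. Then ω(M) determines M: if M₁ ≠ M₂ are two such d-positive sequences, then ω(M₁) ≠ ω(M₂). -/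
/-- Digit at position `n` (0-based) of the concatenation of the blocks
`d₁⋯d_{m k}⁻, d₁⋯d_{m (k+1)}⁻, ...`; here `d` is 1-based (`d i` = `d_i`) and
`d₁⋯d_m⁻` denotes `d₁⋯d_{m-1}(d_m - 1)`. -/
def omegaAux (d m : ℕ → ℕ) : ℕ → ℕ → ℕ
  | k, n =>
    if n + 1 < m k then d (n + 1)
    else if n + 1 = m k then d (m k) - 1
    else if m k = 0 then 0
    else omegaAux d m (k + 1) (n - m k)
termination_by k n => n
decreasing_by simp_wf; omega

/-- `ω(M)` = the infinite concatenation `d₁⋯d_{m₀}⁻ d₁⋯d_{m₁}⁻ ⋯`. -/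
def omegaM (d m : ℕ → ℕ) (n : ℕ) : ℕ := omegaAux d m 0 n

lemma omegaAux_lt (d m : ℕ → ℕ) (k n : ℕ) (h : n + 1 < m k) :
    omegaAux d m k n = d (n + 1) := by
  rw [omegaAux]; simp [h]

lemma omegaAux_eq (d m : ℕ → ℕ) (k n : ℕ) (h : n + 1 = m k) :
    omegaAux d m k n = d (m k) - 1 := by
  rw [omegaAux]; simp [h]

lemma omegaAux_shift (d m : ℕ → ℕ) (k n : ℕ) (h : m k ≤ n) (hpos : 1 ≤ m k) :
    omegaAux d m k n = omegaAux d m (k + 1) (n - m k) := by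
  rw [omegaAux]
  have h1 : ¬ n + 1 < m k := by omega
  have h2 : ¬ n + 1 = m k := by omega
  have h3 : ¬ m k = 0 := by omega
  simp [h1, h2, h3]

lemma firstBlock (d M₁ M₂ : ℕ → ℕ) (k₁ k₂ : ℕ)
    (h1 : 1 ≤ M₁ k₁) (h2 : 1 ≤ M₂ k₂)
    (hd1 : 0 < d (M₁ k₁)) (hd2 : 0 < d (M₂ k₂))
    (H : ∀ n, omegaAux d M₁ k₁ n = omegaAux d M₂ k₂ n) :
    M₁ k₁ = M₂ k₂ := by
  by_contra hne
  rcases lt_or_gt_of_ne hne with hlt | hgt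
  · have := H (M₁ k₁ - 1)
    rw [omegaAux_eq d M₁ k₁ _ (by omega), omegaAux_lt d M₂ k₂ _ (by omega)] at this
    have h' : M₁ k₁ - 1 + 1 = M₁ k₁ := by omega
    rw [h'] at this; omega
  · have := H (M₂ k₂ - 1)
    rw [omegaAux_lt d M₁ k₁ _ (by omega), omegaAux_eq d M₂ k₂ _ (by omega)] at this
    have h' : M₂ k₂ - 1 + 1 = M₂ k₂ := by omega
    rw [h'] at this; omega

/-- The map `M ↦ ω(M)` is injective on `d`-positive sequences of positive integers. -/
theorem stmt7 (α : ℕ) (hα : 1 ≤ α) (d : ℕ → ℕ) (hd : ∀ i, d i ≤ α)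
    (M₁ M₂ : ℕ → ℕ) (h₁pos : ∀ k, 1 ≤ M₁ k) (h₂pos : ∀ k, 1 ≤ M₂ k)
    (h₁d : ∀ k, 0 < d (M₁ k)) (h₂d : ∀ k, 0 < d (M₂ k))
    (hne : M₁ ≠ M₂) : omegaM d M₁ ≠ omegaM d M₂ := by
  intro hω
  apply hne
  have H : ∀ k, ∀ n, omegaAux d M₁ k n = omegaAux d M₂ k n := by
    intro k
    induction k with
    | zero => intro n; exact congrFun hω n
    | succ k ih =>
      have heq : M₁ k = M₂ k :=
        firstBlock d M₁ M₂ k k (h₁pos k) (h₂pos k) (h₁d k) (h₂d k) ih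
      intro n
      have h1 := omegaAux_shift d M₁ k (n + M₁ k) (by omega) (h₁pos k)
      have h2 := omegaAux_shift d M₂ k (n + M₂ k) (by omega) (h₂pos k)
      have := ih (n + M₁ k)
      rw [h1] at this
      rw [heq] at this
      rw [h2] at this
      simpa using this
  funext k
  exact firstBlock d M₁ M₂ k k (h₁pos k) (h₂pos k) (h₁d k) (h₂d k) (H k)
end

section
/- Let V = {v₁, v₂, ...} be an infinite prefix-free set of finite words over a finite alphabet A, and let E ⊂ V^ℕ be the set of infinite concatenations v_{i₁}v_{i₂}⋯ in which every index i ∈ ℕ occurs at least once. Then dim_H E = dim_H V^ℕ, where Hausdorff dimension is with respect to the metric ρ(ω,η) = λ^{min{n: ω_n≠η_n}−1}, 0 < λ < 1. -/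
attribute [local instance] Classical.propDecidable

/-- first index where two sequences differ -/
noncomputable def firstDiff {A : Type*} (x y : ℕ → A) (h : x ≠ y) : ℕ :=
  Nat.find (p := fun n => x n ≠ y n) (by
    by_contra hc
    push_neg at hc
    exact h (funext fun n => hc n))

/-- the metric ρ(ω,η) = λ^{min{n : ω_n ≠ η_n} - 1} (with 1-based indexing), as an edistance -/
noncomputable def rhoEDist {A : Type*} (lam : ℝ) (x y : ℕ → A) : ENNReal :=
  if h : x = y then 0 else ENNReal.ofReal (lam ^ firstDiff x y h)

/-- the sequence space with the metric ρ -/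
noncomputable def rhoSpace (A : Type*) (lam : ℝ) (h0 : 0 < lam) (h1 : lam < 1) :
    EMetricSpace (ℕ → A) where
  edist := rhoEDist lam
  edist_self x := by simp [rhoEDist]
  edist_comm x y := by
    show rhoEDist lam x y = rhoEDist lam y x
    unfold rhoEDist
    rcases eq_or_ne x y with rfl | hxy
    · simp
    · rw [dif_neg hxy, dif_neg (Ne.symm hxy)]
      congr 1
      have h₁ : firstDiff x y hxy ≤ firstDiff y x (Ne.symm hxy) :=
        Nat.find_min' _ (Ne.symm (Nat.find_spec (p := fun n => y n ≠ x n) _))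
      have h₂ : firstDiff y x (Ne.symm hxy) ≤ firstDiff x y hxy :=
        Nat.find_min' _ (Ne.symm (Nat.find_spec (p := fun n => x n ≠ y n) _))
      rw [le_antisymm h₁ h₂]
  eq_of_edist_eq_zero := by
    intro x y h
    replace h : rhoEDist lam x y = 0 := h
    unfold rhoEDist at h
    by_contra hxy
    rw [dif_neg hxy] at h
    have : (0:ℝ) < lam ^ firstDiff x y hxy := pow_pos h0 _
    simp [ENNReal.ofReal_eq_zero] at h
    linarith
  edist_triangle := by
    intro x y z
    show rhoEDist lam x z ≤ rhoEDist lam x y + rhoEDist lam y z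
    unfold rhoEDist
    rcases eq_or_ne x z with rfl | hxz
    · simp
    rw [dif_neg hxz]
    rcases eq_or_ne x y with rfl | hxy
    · rw [dif_pos rfl, dif_neg hxz, zero_add]
    rcases eq_or_ne y z with rfl | hyz
    · rw [dif_pos rfl, dif_neg hxy, add_zero]
    rw [dif_neg hxy, dif_neg hyz]
    have key : firstDiff x y hxy ≤ firstDiff x z hxz ∨
        firstDiff y z hyz ≤ firstDiff x z hxz := by
      by_contra hc
      push_neg at hc
      have e1 : x (firstDiff x z hxz) = y (firstDiff x z hxz) := by
        have := Nat.find_min (p := fun n => x n ≠ y n) _ hc.1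
        simpa using this
      have e2 : y (firstDiff x z hxz) = z (firstDiff x z hxz) := by
        have := Nat.find_min (p := fun n => y n ≠ z n) _ hc.2
        simpa using this
      exact (Nat.find_spec (p := fun n => x n ≠ z n) _) (e1.trans e2)
    have hle : ∀ a b : ℕ, a ≤ b → (lam : ℝ) ^ b ≤ lam ^ a := fun a b hab =>
      pow_le_pow_of_le_one h0.le h1.le hab
    rcases key with hk | hk
    · exact le_trans (le_trans (ENNReal.ofReal_le_ofReal (hle _ _ hk)) le_self_add) le_rfl
    · exact le_trans (ENNReal.ofReal_le_ofReal (hle _ _ hk)) le_add_self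

/-- ω starts with the word w -/
def Cyl {A : Type*} (w : List A) : Set (ℕ → A) :=
  {ω | ∀ i, ∀ h : i < w.length, ω i = w.get ⟨i, h⟩}

/-- ω is an infinite concatenation of words from V -/
def VPow {A : Type*} (V : Set (List A)) : Set (ℕ → A) :=
  {ω | ∃ f : ℕ → List A, (∀ n, f n ∈ V) ∧
    ∀ n, ∀ i, ∀ h : i < (f n).length,
      ω ((∑ k ∈ Finset.range n, (f k).length) + i) = (f n).get ⟨i, h⟩}

namespace StmtAux

variable {A : Type*}

/-- partial sums of word lengths -/
def S (f : ℕ → List A) (n : ℕ) : ℕ := ∑ k ∈ Finset.range n, (f k).length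

lemma S_succ (f : ℕ → List A) (n : ℕ) : S f (n+1) = S f n + (f n).length :=
  Finset.sum_range_succ _ _

lemma S_mono {f : ℕ → List A} (hlen : ∀ k, f k ≠ []) : StrictMono (S f) :=
  strictMono_nat_of_lt_succ fun n => by
    have := List.length_pos_iff.2 (hlen n); rw [S_succ]; omega

lemma le_S {f : ℕ → List A} (hlen : ∀ k, f k ≠ []) (n : ℕ) : n ≤ S f n := by
  induction n with
  | zero => simp [S]
  | succ n ih => have := List.length_pos_iff.2 (hlen n); rw [S_succ]; omega

lemma S_congr {f f' : ℕ → List A} {N : ℕ} (h : ∀ j < N, f j = f' j) :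
    ∀ n ≤ N, S f n = S f' n := by
  intro n hn
  unfold S
  exact Finset.sum_congr rfl fun k hk => by
    rw [h k (lt_of_lt_of_le (Finset.mem_range.1 hk) hn)]

/-- index of the word containing symbol `m` -/
noncomputable def idx (f : ℕ → List A) (m : ℕ) : ℕ :=
  if h : ∃ n, m < S f (n+1) then Nat.find h else 0

lemma idx_spec {f : ℕ → List A} (hlen : ∀ k, f k ≠ []) (m : ℕ) :
    S f (idx f m) ≤ m ∧ m < S f (idx f m + 1) := by
  have hex : ∃ n, m < S f (n+1) := ⟨m, by have := le_S hlen (m+1); omega⟩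
  rw [idx, dif_pos hex]
  refine ⟨?_, Nat.find_spec hex⟩
  rcases Nat.eq_zero_or_pos (Nat.find hex) with h | h
  · rw [h]; exact (by simp [S] : S f 0 = 0) ▸ Nat.zero_le m
  · have h2 : ¬ m < S f (Nat.find hex - 1 + 1) := Nat.find_min hex (by omega)
    have h3 : Nat.find hex - 1 + 1 = Nat.find hex := by omega
    rw [h3] at h2
    omega

lemma idx_eq {f : ℕ → List A} (hlen : ∀ k, f k ≠ []) {m n : ℕ}
    (h1 : S f n ≤ m) (h2 : m < S f (n+1)) : idx f m = n := by
  have hs := idx_spec hlen m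
  by_contra hne
  rcases lt_or_gt_of_ne hne with h | h
  · have : S f (idx f m + 1) ≤ S f n := (S_mono hlen).monotone h
    omega
  · have : S f (n + 1) ≤ S f (idx f m) := (S_mono hlen).monotone h
    omega

/-- infinite concatenation of the words `f 0, f 1, …` -/
noncomputable def concat (d : A) (f : ℕ → List A) (m : ℕ) : A :=
  (f (idx f m)).getD (m - S f (idx f m)) d

lemma concat_spec {f : ℕ → List A} (hlen : ∀ k, f k ≠ []) (d : A) {n i : ℕ}
    (h : i < (f n).length) : concat d f (S f n + i) = (f n).getD i d := by
  have h1 : S f n ≤ S f n + i := Nat.le_add_right _ _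
  have h2 : S f n + i < S f (n+1) := by rw [S_succ]; omega
  rw [concat, idx_eq hlen h1 h2, Nat.add_sub_cancel_left]


lemma concat_mem_VPow {V : Set (List A)} {f : ℕ → List A} (hf : ∀ n, f n ∈ V)
    (hlen : ∀ k, f k ≠ []) (d : A) : concat d f ∈ VPow V := by
  refine ⟨f, hf, fun n i h => ?_⟩
  have : (∑ k ∈ Finset.range n, (f k).length) = S f n := rfl
  rw [this, concat_spec hlen d h, List.getD_eq_getElem _ _ h]
  simp [List.get_eq_getElem]

lemma eq_concat_of_VPow {V : Set (List A)} {ω : ℕ → A} {f : ℕ → List A}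
    (hfV : ∀ n, f n ∈ V)
    (hω : ∀ n, ∀ i, ∀ h : i < (f n).length,
      ω ((∑ k ∈ Finset.range n, (f k).length) + i) = (f n).get ⟨i, h⟩)
    (hlen : ∀ k, f k ≠ []) (d : A) : ω = concat d f := by
  funext m
  obtain ⟨h1, h2⟩ := idx_spec hlen m
  set n := idx f m with hn
  have hi : m - S f n < (f n).length := by rw [S_succ] at h2; omega
  have hm : m = S f n + (m - S f n) := by omega
  rw [hm, concat_spec hlen d hi]
  have h5 : ω (S f n + (m - S f n)) = (f n).get ⟨m - S f n, hi⟩ := hω n (m - S f n) hi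
  rw [h5, List.getD_eq_getElem _ _ hi]
  simp [List.get_eq_getElem]

section PF
variable {v : ℕ → List A} (hne : ∀ i, v i ≠ []) (hpf : ∀ i j, v i <+: v j → i = j)
include hne hpf

lemma eq_of_agree_getD_aux (d : A) {a b : List A} (ha : a ∈ Set.range v)
    (hb : b ∈ Set.range v) (hlen : a.length ≤ b.length)
    (h : ∀ j, j < a.length → j < b.length → a.getD j d = b.getD j d) : a = b := by
  obtain ⟨i, rfl⟩ := ha
  obtain ⟨j, rfl⟩ := hb
  have hpre : v i <+: v j := by
    rw [List.prefix_iff_eq_take]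
    apply List.ext_getElem
    · simp [Nat.min_eq_left hlen]
    · intro k hk1 hk2
      simp only [List.getElem_take]
      have hk : k < (v i).length := hk1
      have := h k hk (lt_of_lt_of_le hk hlen)
      rwa [List.getD_eq_getElem _ _ hk, List.getD_eq_getElem _ _ (lt_of_lt_of_le hk hlen)]
        at this
  rw [hpf i j hpre]

lemma eq_of_agree_getD (d : A) {a b : List A} (ha : a ∈ Set.range v)
    (hb : b ∈ Set.range v)
    (h : ∀ j, j < a.length → j < b.length → a.getD j d = b.getD j d) : a = b := by
  rcases le_total a.length b.length with hl | hl
  · exact eq_of_agree_getD_aux hne hpf d ha hb hl h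
  · exact (eq_of_agree_getD_aux hne hpf d hb ha hl fun j h1 h2 => (h j h2 h1).symm).symm

/-- least position at which two distinct words of the prefix-free family differ -/
lemma exists_list_firstDiff (d : A) {a b : List A} (ha : a ∈ Set.range v)
    (hb : b ∈ Set.range v) (hab : a ≠ b) :
    ∃ i, i < a.length ∧ i < b.length ∧ a.getD i d ≠ b.getD i d ∧
      ∀ j < i, a.getD j d = b.getD j d := by
  have hex : ∃ i, i < a.length ∧ i < b.length ∧ a.getD i d ≠ b.getD i d := by
    by_contra hc
    push_neg at hc
    exact hab (eq_of_agree_getD hne hpf d ha hb fun j h1 h2 => hc j h1 h2)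
  obtain ⟨h1, h2, h3⟩ := Nat.find_spec hex
  refine ⟨Nat.find hex, h1, h2, h3, fun j hj => ?_⟩
  have h4 := Nat.find_min hex hj
  push_neg at h4
  exact h4 (lt_trans hj h1) (lt_trans hj h2)

/-- if `f` and `f'` agree before `N` and their `N`-th words differ at list-position `i`,
then the concatenations agree before `S f N + i` and differ there. -/
lemma concat_agree_and_diff {f f' : ℕ → List A} (d : A)
    (hf : ∀ n, f n ∈ Set.range v) (hf' : ∀ n, f' n ∈ Set.range v)
    {N : ℕ} (hprev : ∀ j < N, f j = f' j) {i : ℕ}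
    (hi1 : i < (f N).length) (hi2 : i < (f' N).length)
    (hdiff : (f N).getD i d ≠ (f' N).getD i d)
    (hbelow : ∀ j < i, (f N).getD j d = (f' N).getD j d) :
    (∀ q < S f N + i, concat d f q = concat d f' q) ∧
      concat d f (S f N + i) ≠ concat d f' (S f N + i) := by
  have hlen : ∀ k, f k ≠ [] := fun k => by
    obtain ⟨j, hj⟩ := hf k; rw [← hj]; exact hne j
  have hlen' : ∀ k, f' k ≠ [] := fun k => by
    obtain ⟨j, hj⟩ := hf' k; rw [← hj]; exact hne j
  have hS : ∀ n ≤ N, S f n = S f' n := S_congr hprev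
  constructor
  · intro q hq
    rcases lt_or_ge q (S f N) with hq1 | hq1
    · -- q lies in a word with index < N
      obtain ⟨ha1, ha2⟩ := idx_spec hlen q
      set n := idx f q with hn
      have hnN : n < N := by
        by_contra hc
        push_neg at hc
        exact absurd (lt_of_lt_of_le hq1 (le_trans ((S_mono hlen).monotone hc) ha1))
          (lt_irrefl q)
      have hw : f n = f' n := hprev n hnN
      have hb1 : S f' n ≤ q := by rw [← hS n hnN.le]; exact ha1
      have hb2 : q < S f' (n+1) := by rw [← hS (n+1) hnN]; exact ha2
      have hidx' : idx f' q = n := idx_eq hlen' hb1 hb2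
      rw [concat, concat, hidx', idx_eq hlen ha1 ha2, hw, hS n hnN.le]
    · -- q = S f N + j with j < i
      set j := q - S f N with hj
      have hq2 : q = S f N + j := by omega
      have hji : j < i := by omega
      have hq3 : q = S f' N + j := by rw [← hS N le_rfl]; exact hq2
      rw [hq2, concat_spec hlen d (lt_trans hji hi1), hS N le_rfl,
        concat_spec hlen' d (lt_trans hji hi2)]
      exact hbelow j hji
  · have e1 : concat d f (S f N + i) = (f N).getD i d := concat_spec hlen d hi1
    have e2 : concat d f' (S f N + i) = (f' N).getD i d := by
      rw [hS N le_rfl]; exact concat_spec hlen' d hi2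
    rw [e1, e2]; exact hdiff

omit hne hpf in
lemma firstDiff_eq_of {x y : ℕ → A} (h : x ≠ y) {m : ℕ} (hm : x m ≠ y m)
    (hb : ∀ j < m, x j = y j) : firstDiff x y h = m := by
  unfold firstDiff
  rw [Nat.find_eq_iff]
  exact ⟨hm, fun j hj => not_ne_iff.2 (hb j hj)⟩

/-- uniqueness of decompositions into words from a prefix-free family -/
lemma decomp_unique {f f' : ℕ → List A} (d : A)
    (hf : ∀ n, f n ∈ Set.range v) (hf' : ∀ n, f' n ∈ Set.range v)
    (h : concat d f = concat d f') : f = f' := by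
  funext k
  induction k using Nat.strong_induction_on with
  | _ k ih =>
    by_contra hk
    obtain ⟨i, hi1, hi2, hdiff, hbelow⟩ :=
      exists_list_firstDiff hne hpf d (hf k) (hf' k) hk
    have := (concat_agree_and_diff hne hpf d hf hf' (fun j hj => ih j hj)
      hi1 hi2 hdiff hbelow).2
    rw [h] at this
    exact this rfl

omit hne hpf in
lemma strictMono_nat_add {g : ℕ → ℕ} (hg : StrictMono g) {a b : ℕ} (hab : a ≤ b) :
    g a + (b - a) ≤ g b := by
  have key : ∀ c, g a + c ≤ g (a + c) := by
    intro c
    induction c with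
    | zero => simp
    | succ c ih => exact lt_of_le_of_lt ih (hg (by omega))
  calc g a + (b - a) ≤ g (a + (b - a)) := key _
    _ = g b := by rw [Nat.add_sub_cancel' hab]

section Ins
variable (v) (Q : ℕ)

/-- number of original words before the `k`-th inserted word -/
def M (k : ℕ) : ℕ := Q * S v (k+1) + k

/-- position of the `k`-th inserted word in the output word sequence -/
def t (k : ℕ) : ℕ := M v Q k + k

/-- number of inserted words among the first `j` output positions -/
noncomputable def cI (j : ℕ) : ℕ :=
  Nat.find (⟨j, by unfold t M; omega⟩ : ∃ k, j ≤ t v Q k)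

/-- number of inserted words among outputs corresponding to the first `n` input words -/
noncomputable def eI (n : ℕ) : ℕ :=
  Nat.find (⟨n + 1, by unfold M; omega⟩ : ∃ k, n < M v Q k)

end Ins

section Ins2
variable (Q : ℕ)
include hne

omit hpf in
lemma M_strictMono : StrictMono (M v Q) :=
  strictMono_nat_of_lt_succ fun k => by
    have h1 : S v (k+1) ≤ S v (k+1+1) := (S_mono hne).monotone (by omega)
    unfold M; have := Nat.mul_le_mul_left Q h1; omega

omit hpf in
lemma t_strictMono : StrictMono (t v Q) := fun a b hab => by
  have := M_strictMono hne Q hab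
  unfold t; omega

omit hpf in
lemma eI_spec {n k : ℕ} : M v Q k ≤ n ↔ k < eI v Q n := by
  constructor
  · intro h
    by_contra hc
    push_neg at hc
    have h2 := Nat.find_spec (⟨n + 1, by unfold M; omega⟩ : ∃ k, n < M v Q k)
    have h3 : M v Q (eI v Q n) ≤ M v Q k := (M_strictMono hne Q).monotone hc
    show False
    have : n < M v Q (eI v Q n) := h2
    omega
  · intro h
    have := Nat.find_min (⟨n + 1, by unfold M; omega⟩ : ∃ k, n < M v Q k) h
    omega

omit hpf in
lemma cI_spec {j k : ℕ} : t v Q k < j ↔ k < cI v Q j := by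
  constructor
  · intro h
    by_contra hc
    push_neg at hc
    have h2 : j ≤ t v Q (cI v Q j) :=
      Nat.find_spec (⟨j, by unfold t M; omega⟩ : ∃ k, j ≤ t v Q k)
    have h3 : t v Q (cI v Q j) ≤ t v Q k := (t_strictMono hne Q).monotone hc
    omega
  · intro h
    have := Nat.find_min (⟨j, by unfold t M; omega⟩ : ∃ k, j ≤ t v Q k) h
    omega

omit hpf in
lemma eI_mono : Monotone (eI v Q) := fun a b hab => by
  by_contra hc
  push_neg at hc
  have h1 : M v Q (eI v Q b) ≤ a := (eI_spec hne Q).2 hc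
  have h2 : b < M v Q (eI v Q b) :=
    Nat.find_spec (⟨b + 1, by unfold M; omega⟩ : ∃ k, b < M v Q k)
  omega

omit hpf in
lemma addE_strictMono : StrictMono (fun n => n + eI v Q n) := fun a b hab => by
  have := eI_mono hne Q hab.le; dsimp; omega

omit hpf in
lemma not_ins (n : ℕ) : ¬ ∃ k, t v Q k = n + eI v Q n := by
  rintro ⟨k, hk⟩
  rcases lt_or_ge k (eI v Q n) with h | h
  · have h1 : M v Q k ≤ n := (eI_spec hne Q).2 h
    have : t v Q k = M v Q k + k := rfl
    omega
  · have h2 : n < M v Q (eI v Q n) :=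
      Nat.find_spec (⟨n + 1, by unfold M; omega⟩ : ∃ k, n < M v Q k)
    have h3 : M v Q (eI v Q n) ≤ M v Q k := (M_strictMono hne Q).monotone h
    have : t v Q k = M v Q k + k := rfl
    omega

omit hne hpf in
lemma cI_at_apply_le (j : ℕ) : cI v Q j ≤ j := by
  have h2 : j ≤ t v Q j := by unfold t M; omega
  have := Nat.find_min' (⟨j, by unfold t M; omega⟩ : ∃ k, j ≤ t v Q k) h2
  exact this

omit hne hpf in
lemma eI_eq {m c : ℕ} (h1 : m < M v Q c) (h2 : ∀ k < c, M v Q k ≤ m) :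
    eI v Q m = c := by
  unfold eI
  rw [Nat.find_eq_iff]
  exact ⟨h1, fun k hk => not_lt.2 (h2 k hk)⟩

omit hpf in
lemma cI_at (n : ℕ) : cI v Q (n + eI v Q n) = eI v Q n := by
  have h1 : ∀ k, t v Q k < n + eI v Q n ↔ k < eI v Q n := by
    intro k
    constructor
    · intro h
      by_contra hc
      push_neg at hc
      have h2 : n < M v Q (eI v Q n) :=
        Nat.find_spec (⟨n + 1, by unfold M; omega⟩ : ∃ k, n < M v Q k)
      have h3 : M v Q (eI v Q n) ≤ M v Q k := (M_strictMono hne Q).monotone hc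
      have ht : t v Q k = M v Q k + k := rfl
      omega
    · intro h
      have h1 : M v Q k ≤ n := (eI_spec hne Q).2 h
      have ht : t v Q k = M v Q k + k := rfl
      omega
  have h2 : ∀ k, n + eI v Q n ≤ t v Q k ↔ eI v Q n ≤ k := by
    intro k
    rw [← not_lt, ← not_lt, not_iff_not]
    exact h1 k
  unfold cI
  rw [Nat.find_eq_iff]
  exact ⟨(h2 _).2 le_rfl, fun k hk => by rw [not_le]; exact (h1 k).2 hk⟩

/-- the output word sequence: `f`'s words with `v k` inserted at position `t k` -/
noncomputable def outF (f : ℕ → List A) (j : ℕ) : List A :=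
  if h : ∃ k, t v Q k = j then v (Nat.find h) else f (j - cI v Q j)

omit hpf in
lemma outF_apply (f : ℕ → List A) (n : ℕ) :
    outF (v := v) Q f (n + eI v Q n) = f n := by
  rw [outF, dif_neg (not_ins hne Q n), cI_at hne Q, Nat.add_sub_cancel]

omit hpf in
lemma outF_ins (f : ℕ → List A) (k : ℕ) : outF (v := v) Q f (t v Q k) = v k := by
  have h : ∃ k', t v Q k' = t v Q k := ⟨k, rfl⟩
  rw [outF, dif_pos h]
  congr 1
  exact (t_strictMono hne Q).injective (Nat.find_spec h)

omit hne hpf in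
lemma outF_mem {V : Set (List A)} (hv : ∀ k, v k ∈ V) {f : ℕ → List A}
    (hf : ∀ n, f n ∈ V) (j : ℕ) : outF (v := v) Q f j ∈ V := by
  rw [outF]
  split
  · exact hv _
  · exact hf _

omit hpf in
lemma noins_form {j : ℕ} (h : ¬ ∃ k, t v Q k = j) :
    j = (j - cI v Q j) + eI v Q (j - cI v Q j) := by
  set c := cI v Q j with hc
  set n := j - c with hn
  have hcj : c ≤ j := cI_at_apply_le Q j
  have hjc : j = n + c := by omega
  -- show eI v Q n = c
  have h2 : j ≤ t v Q c := Nat.find_spec (⟨j, by unfold t M; omega⟩ : ∃ k, j ≤ t v Q k)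
  have h2' : j ≠ t v Q c := fun hh => h ⟨c, hh.symm⟩
  have h2'' : j + 1 ≤ t v Q c := by omega
  have hMc : n < M v Q c := by
    have ht : t v Q c = M v Q c + c := rfl
    omega
  have hMk : ∀ k, k < c → M v Q k ≤ n := by
    intro k hk
    have h3 : t v Q k < j := (cI_spec hne Q).2 hk
    rcases Nat.eq_zero_or_pos c with hc0 | hc0
    · omega
    have h4 : t v Q (c - 1) < j := (cI_spec hne Q).2 (by omega)
    have h5 : t v Q k + (c - 1 - k) ≤ t v Q (c - 1) :=
      strictMono_nat_add (t_strictMono hne Q) (by omega)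
    have ht : t v Q k = M v Q k + k := rfl
    omega
  have he : eI v Q n = c := eI_eq Q hMc hMk
  omega

omit hpf in
lemma outF_congr {f f' : ℕ → List A} {n : ℕ} (hprev : ∀ j < n, f j = f' j) :
    ∀ p < n + eI v Q n, outF (v := v) Q f p = outF (v := v) Q f' p := by
  intro p hp
  by_cases h : ∃ k, t v Q k = p
  · rw [outF, dif_pos h, outF, dif_pos h]
  · rw [outF, dif_neg h, outF, dif_neg h]
    apply hprev
    set n' := p - cI v Q p with hn'
    have hform : p = n' + eI v Q n' := noins_form hne Q h
    by_contra hc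
    push_neg at hc
    have h2 : n + eI v Q n ≤ n' + eI v Q n' :=
      (addE_strictMono hne Q).monotone hc
    omega

omit hpf in
lemma eI_zero (hQ' : 0 < Q) : eI v Q 0 = 0 := by
  have h0 : 0 < M v Q 0 := by
    have hl := List.length_pos_iff.2 (hne 0)
    have h1 : 0 < S v (0+1) := by unfold S; simpa using hl
    have : 0 < Q * S v (0+1) := Nat.mul_pos hQ' h1
    unfold M
    omega
  exact eI_eq Q h0 (by omega)

omit hpf in
lemma eI_succ (n : ℕ) :
    (M v Q (eI v Q n) = n + 1 ∧ eI v Q (n+1) = eI v Q n + 1) ∨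
    (n + 1 < M v Q (eI v Q n) ∧ eI v Q (n+1) = eI v Q n) := by
  have h2 : n < M v Q (eI v Q n) :=
    Nat.find_spec (⟨n + 1, by unfold M; omega⟩ : ∃ k, n < M v Q k)
  have hbelow : ∀ k < eI v Q n, M v Q k ≤ n := fun k hk => (eI_spec hne Q).2 hk
  rcases eq_or_lt_of_le (show n + 1 ≤ M v Q (eI v Q n) from h2) with h | h
  · left
    refine ⟨h.symm, eI_eq Q ?_ ?_⟩
    · have := M_strictMono hne Q (show eI v Q n < eI v Q n + 1 by omega)
      omega
    · intro k hk
      rcases Nat.lt_or_ge k (eI v Q n) with h3 | h3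
      · exact le_trans (hbelow k h3) (by omega)
      · have hke : k = eI v Q n := by omega
        rw [hke]
        omega
  · right
    exact ⟨h, eI_eq Q h (fun k hk => le_trans (hbelow k hk) (by omega))⟩

omit hpf in
lemma S_outF (hQ' : 0 < Q) (f : ℕ → List A) (n : ℕ) :
    S (outF (v := v) Q f) (n + eI v Q n) = S f n + S v (eI v Q n) := by
  induction n with
  | zero => rw [eI_zero hne Q hQ']; simp [S]
  | succ n ih =>
    rcases eI_succ hne Q n with ⟨hM, he⟩ | ⟨hM, he⟩
    · have harith : n + 1 + eI v Q (n+1) = (n + eI v Q n) + 1 + 1 := by omega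
      rw [harith, S_succ, S_succ, ih]
      have h1 : outF (v := v) Q f (n + eI v Q n) = f n := outF_apply hne Q f n
      have h2 : outF (v := v) Q f (n + eI v Q n + 1) = v (eI v Q n) := by
        have ht : t v Q (eI v Q n) = M v Q (eI v Q n) + eI v Q n := rfl
        have : t v Q (eI v Q n) = n + eI v Q n + 1 := by omega
        rw [← this]
        exact outF_ins hne Q f _
      rw [h1, h2, he, S_succ, S_succ]
      ring
    · have harith : n + 1 + eI v Q (n+1) = (n + eI v Q n) + 1 := by omega
      rw [harith, S_succ, ih, outF_apply hne Q f n, he, S_succ]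
      ring

lemma holder_key (hQ' : 0 < Q) (d : A) {lam : ℝ} (hl0 : 0 < lam) (hl1 : lam < 1)
    {f f' : ℕ → List A} (hf : ∀ n, f n ∈ Set.range v) (hf' : ∀ n, f' n ∈ Set.range v)
    (hff : f ≠ f') :
    rhoEDist lam (concat d f) (concat d f') ≤
      (rhoEDist lam (concat d (outF (v := v) Q f)) (concat d (outF (v := v) Q f')))
        ^ ((Q : ℝ) / (Q + 1)) := by
  -- the first word index where f and f' differ
  have hex : ∃ n, f n ≠ f' n := Function.ne_iff.1 hff
  set n := Nat.find hex with hn_def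
  have hn : f n ≠ f' n := Nat.find_spec hex
  have hprev : ∀ j < n, f j = f' j := fun j hj => not_ne_iff.1 (Nat.find_min hex hj)
  -- the first list position where the n-th words differ
  obtain ⟨i, hi1, hi2, hdiff, hbelow⟩ :=
    exists_list_firstDiff hne hpf d (hf n) (hf' n) hn
  obtain ⟨hagree, hdisagree⟩ :=
    concat_agree_and_diff hne hpf d hf hf' hprev hi1 hi2 hdiff hbelow
  have hxy : concat d f ≠ concat d f' := fun h => hdisagree (congrFun h _)
  set m := S f n + i with hm_def
  have hfd : firstDiff _ _ hxy = m := firstDiff_eq_of hxy hdisagree hagree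
  -- the out side
  set N' := n + eI v Q n with hN'_def
  have hFmem : ∀ j, outF (v := v) Q f j ∈ Set.range v :=
    outF_mem Q (fun k => Set.mem_range_self k) hf
  have hFmem' : ∀ j, outF (v := v) Q f' j ∈ Set.range v :=
    outF_mem Q (fun k => Set.mem_range_self k) hf'
  have hprev' : ∀ j < N', outF (v := v) Q f j = outF (v := v) Q f' j :=
    outF_congr hne Q hprev
  have hoF : outF (v := v) Q f N' = f n := outF_apply hne Q f n
  have hoF' : outF (v := v) Q f' N' = f' n := outF_apply hne Q f' n
  have hi1' : i < (outF (v := v) Q f N').length := by rw [hoF]; exact hi1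
  have hi2' : i < (outF (v := v) Q f' N').length := by rw [hoF']; exact hi2
  have hdiff' : (outF (v := v) Q f N').getD i d ≠ (outF (v := v) Q f' N').getD i d := by
    rw [hoF, hoF']; exact hdiff
  have hbelow' : ∀ j < i,
      (outF (v := v) Q f N').getD j d = (outF (v := v) Q f' N').getD j d := by
    intro j hj; rw [hoF, hoF']; exact hbelow j hj
  obtain ⟨hagree', hdisagree'⟩ :=
    concat_agree_and_diff hne hpf d hFmem hFmem' hprev' hi1' hi2' hdiff' hbelow'
  have hxy' : concat d (outF (v := v) Q f) ≠ concat d (outF (v := v) Q f') :=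
    fun h => hdisagree' (congrFun h _)
  set m' := S (outF (v := v) Q f) N' + i with hm'_def
  have hfd' : firstDiff _ _ hxy' = m' := firstDiff_eq_of hxy' hdisagree' hagree'
  -- numeric facts
  set K := S v (eI v Q n) with hK_def
  have hSout : S (outF (v := v) Q f) N' = S f n + K := S_outF hne Q hQ' f n
  have hm' : m' = m + K := by rw [hm'_def, hSout]; omega
  have hQK : Q * K ≤ n := by
    rcases Nat.eq_zero_or_pos (eI v Q n) with h | h
    · rw [hK_def, h]; simp [S]
    · have hMle : M v Q (eI v Q n - 1) ≤ n := (eI_spec hne Q).2 (by omega)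
      have heq : eI v Q n - 1 + 1 = eI v Q n := by omega
      have : M v Q (eI v Q n - 1) = Q * K + (eI v Q n - 1) := by
        rw [M, heq, ← hK_def]
      omega
  have hlen : ∀ k, f k ≠ [] := fun k => by
    obtain ⟨j, hj⟩ := hf k; rw [← hj]; exact hne j
  have hnm : n ≤ m := le_trans (le_S hlen n) (by omega)
  -- the real inequality
  have hreal : lam ^ m ≤ (lam ^ m') ^ ((Q : ℝ) / (Q + 1)) := by
    have hQ1 : (0 : ℝ) < (Q : ℝ) + 1 := by positivity
    have hexp : (m' : ℝ) * ((Q : ℝ) / (Q + 1)) ≤ (m : ℝ) := by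
      rw [← mul_div_assoc, div_le_iff₀ hQ1]
      have h1 : (m' : ℝ) * Q = m * Q + K * Q := by rw [hm']; push_cast; ring
      have h2 : (K : ℝ) * Q ≤ m := by
        have : (Q : ℝ) * K ≤ n := by exact_mod_cast hQK
        have hnm' : (n : ℝ) ≤ m := by exact_mod_cast hnm
        linarith [this, hnm']
      rw [h1]
      have h3 : (m : ℝ) * ((Q : ℝ) + 1) = m * Q + m := by ring
      linarith
    calc lam ^ m = lam ^ (m : ℝ) := (Real.rpow_natCast lam m).symm
      _ ≤ lam ^ ((m' : ℝ) * ((Q : ℝ) / (Q + 1))) :=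
          Real.rpow_le_rpow_of_exponent_ge hl0 hl1.le hexp
      _ = (lam ^ (m' : ℝ)) ^ ((Q : ℝ) / (Q + 1)) := Real.rpow_mul hl0.le _ _
      _ = (lam ^ m') ^ ((Q : ℝ) / (Q + 1)) := by rw [Real.rpow_natCast]
  -- conclude in ENNReal
  rw [rhoEDist, dif_neg hxy, rhoEDist, dif_neg hxy', hfd, hfd',
    ENNReal.ofReal_rpow_of_pos (pow_pos hl0 m')]
  exact ENNReal.ofReal_le_ofReal hreal

end Ins2
end PF
end StmtAux

open StmtAux
open scoped NNReal ENNReal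

open MeasureTheory in
theorem stmt10 {A : Type*} [Fintype A] (lam : ℝ) (h0 : 0 < lam) (h1 : lam < 1)
    (v : ℕ → List A) (hinj : Function.Injective v)
    (hne : ∀ i, v i ≠ [])
    (hpf : ∀ i j, v i <+: v j → i = j) :
    letI : EMetricSpace (ℕ → A) := rhoSpace A lam h0 h1
    dimH (VPow (Set.range v) \ ⋃ i : ℕ, VPow (Set.range v \ {v i}))
      = dimH (VPow (Set.range v)) := by
  letI : EMetricSpace (ℕ → A) := rhoSpace A lam h0 h1
  set d : A := (v 0).head (hne 0) with hd
  set E : Set (ℕ → A) := VPow (Set.range v) \ ⋃ i : ℕ, VPow (Set.range v \ {v i}) with hE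
  set B : Set (ℕ → A) := VPow (Set.range v) with hB
  have hlen_of : ∀ {f : ℕ → List A}, (∀ n, f n ∈ Set.range v) → ∀ k, f k ≠ [] := by
    intro f hf k
    obtain ⟨j, hj⟩ := hf k
    rw [← hj]; exact hne j
  refine le_antisymm (dimH_mono Set.diff_subset) ?_
  -- main direction : dimH B ≤ dimH E
  have key : ∀ Q : ℕ, 0 < Q →
      dimH B ≤ dimH E / (((Q : ℝ≥0) / ((Q : ℝ≥0) + 1) : ℝ≥0) : ℝ≥0∞) := by
    intro Q hQ
    set r : ℝ≥0 := (Q : ℝ≥0) / ((Q : ℝ≥0) + 1) with hr_def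
    have hr : 0 < r := by
      rw [hr_def]
      positivity
    set G : (ℕ → List A) → (ℕ → A) := fun f => concat d (outF (v := v) Q f) with hG
    set W : Set (ℕ → List A) := {f | ∀ n, f n ∈ Set.range v} with hW
    -- injectivity of G on W
    have hGinj : ∀ f ∈ W, ∀ f2 ∈ W, G f = G f2 → f = f2 := by
      intro f hf f2 hf2 hGf
      have hout : outF (v := v) Q f = outF (v := v) Q f2 :=
        decomp_unique hne hpf d (outF_mem Q (fun k => Set.mem_range_self k) hf)
          (outF_mem Q (fun k => Set.mem_range_self k) hf2) hGf
      funext n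
      have e1 := outF_apply hne Q f n
      have e2 := outF_apply hne Q f2 n
      rw [← e1, ← e2, hout]
    -- the left inverse of G
    set h : (ℕ → A) → (ℕ → A) := fun ω =>
      if hh : ∃ f, (∀ n, f n ∈ Set.range v) ∧ G f = ω then concat d hh.choose else ω
      with hh_def
    have h_on : ∀ f ∈ W, h (G f) = concat d f := by
      intro f hf
      have hh : ∃ f', (∀ n, f' n ∈ Set.range v) ∧ G f' = G f := ⟨f, hf, rfl⟩
      have hch := hh.choose_spec
      have : hh.choose = f := hGinj _ hch.1 _ hf hch.2
      simp only [hh_def, dif_pos hh, this]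
    -- G '' W is inside E
    have hGE : G '' W ⊆ E := by
      rintro ω ⟨f, hf, rfl⟩
      constructor
      · exact concat_mem_VPow (outF_mem Q (fun k => Set.mem_range_self k) hf)
          (hlen_of (outF_mem Q (fun k => Set.mem_range_self k) hf)) d
      · intro hmem
        simp only [Set.mem_iUnion] at hmem
        obtain ⟨i, f2, hf2, hω⟩ := hmem
        have hf2' : ∀ n, f2 n ∈ Set.range v := fun n => (hf2 n).1
        have heq : G f = concat d f2 :=
          eq_concat_of_VPow hf2 hω (hlen_of hf2') d
        have hout : outF (v := v) Q f = f2 :=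
          decomp_unique hne hpf d (outF_mem Q (fun k => Set.mem_range_self k) hf)
            hf2' heq
        have hins : f2 (t v Q i) = v i := by rw [← hout]; exact outF_ins hne Q f i
        exact (hf2 (t v Q i)).2 (by rw [hins]; rfl)
    -- h is Hölder on G '' W
    have hHolder : HolderOnWith 1 r h (G '' W) := by
      rintro x ⟨f, hf, rfl⟩ y ⟨f2, hf2, rfl⟩
      rw [h_on f hf, h_on f2 hf2]
      rcases eq_or_ne f f2 with rfl | hff
      · show rhoEDist lam (concat d f) (concat d f) ≤ _
        rw [rhoEDist, dif_pos rfl]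
        exact zero_le
      · show rhoEDist lam (concat d f) (concat d f2) ≤
          1 * rhoEDist lam (G f) (G f2) ^ (r : ℝ)
        rw [one_mul]
        have hrc : (r : ℝ) = (Q : ℝ) / ((Q : ℝ) + 1) := by
          rw [hr_def]; push_cast; ring
        rw [hrc]
        exact holder_key hne hpf Q hQ d h0 h1 hf hf2 hff
    -- h maps G '' W onto B
    have himg : h '' (G '' W) = B := by
      apply Set.Subset.antisymm
      · rintro ω ⟨x, ⟨f, hf, rfl⟩, rfl⟩
        rw [h_on f hf]
        exact concat_mem_VPow hf (hlen_of hf) d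
      · intro ω hω
        obtain ⟨f, hf, hωf⟩ := hω
        have hωc : ω = concat d f := eq_concat_of_VPow hf hωf (hlen_of hf) d
        exact ⟨G f, ⟨f, hf, rfl⟩, by rw [h_on f hf, hωc]⟩
    calc dimH B = dimH (h '' (G '' W)) := by rw [himg]
      _ ≤ dimH (G '' W) / r := hHolder.dimH_image_le hr
      _ ≤ dimH E / r := ENNReal.div_le_div_right (dimH_mono hGE) _
  -- pass to the limit in Q
  apply ENNReal.le_of_forall_lt_one_mul_le
  intro z hz
  rcases eq_or_ne z 0 with rfl | hz0
  · simp
  have hz1 : 1 - z ≠ 0 := by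
    rw [← pos_iff_ne_zero]
    exact tsub_pos_of_lt hz
  obtain ⟨n, hn⟩ := ENNReal.exists_inv_nat_lt hz1
  set Q : ℕ := n + 1 with hQdef
  set q : ℝ≥0∞ := (Q : ℝ≥0∞) with hq_def
  have hmono : ((n : ℝ≥0∞)) ≤ q + 1 := by
    rw [hq_def, hQdef]
    push_cast
    exact le_trans le_self_add le_self_add
  have hqinv : ((q + 1))⁻¹ ≤ 1 - z :=
    le_trans (ENNReal.inv_le_inv.2 hmono) hn.le
  have hq1 : q + 1 ≠ 0 := by
    intro hcon
    rw [add_eq_zero] at hcon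
    exact one_ne_zero hcon.2
  have hq2 : q + 1 ≠ ⊤ := by
    rw [hq_def]
    exact ENNReal.add_ne_top.2 ⟨ENNReal.natCast_ne_top Q, ENNReal.one_ne_top⟩
  have hsum : q / (q + 1) + (q + 1)⁻¹ = 1 := by
    rw [← one_div, ENNReal.div_add_div_same]
    exact ENNReal.div_self hq1 hq2
  have hzq : z ≤ q / (q + 1) := by
    have h3 : z + (q + 1)⁻¹ ≤ q / (q + 1) + (q + 1)⁻¹ := by
      rw [hsum]
      calc z + (q + 1)⁻¹ ≤ z + (1 - z) := add_le_add le_rfl hqinv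
        _ = 1 := add_tsub_cancel_of_le hz.le
    exact ENNReal.le_of_add_le_add_right (ENNReal.inv_ne_top.2 hq1) h3
  have hcoe : (((Q : ℝ≥0) / ((Q : ℝ≥0) + 1) : ℝ≥0) : ℝ≥0∞) = q / (q + 1) := by
    rw [ENNReal.coe_div (by positivity), hq_def]
    push_cast
    rfl
  have hkey := key Q (by omega)
  rw [hcoe] at hkey
  calc z * dimH B ≤ (q / (q + 1)) * dimH B := mul_le_mul_left hzq _
    _ ≤ dimH E := ENNReal.mul_le_of_le_div' hkey
end

section
/- Let 1 < β < α+1, let d = d(β) be the quasi-greedy expansion of 1 in base β, and suppose there exists n₀ ∈ ℕ with σ^{n₀}(d̄) ≥ d lexicographically (where d̄ is the digit-reflection a ↦ α−a applied coordinatewise). Then every ω ∈ U_β (i.e., every ω with σ^n(ω) < d and σ^n(ω̄) < d for all n ≥ 0) satisfies ω_{n+1}⋯ω_{n+n₀} < d₁⋯d_{n₀} for all n ≥ 0. -/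
/-- Strict lexicographic order on sequences. -/
def SeqLt (x y : ℕ → ℕ) : Prop := ∃ n, (∀ i < n, x i = y i) ∧ x n < y n

/-- The left shift `σⁿ`. -/
def shift (n : ℕ) (x : ℕ → ℕ) : ℕ → ℕ := fun i => x (n + i)

/-- The digit reflection `a ↦ α - a`, coordinatewise. -/
def refl' (α : ℕ) (x : ℕ → ℕ) : ℕ → ℕ := fun i => α - x i

lemma seqlt_asymm {x y : ℕ → ℕ} (h : SeqLt x y) (h' : SeqLt y x) : False := by
  obtain ⟨m, hm, hm'⟩ := h
  obtain ⟨k, hk, hk'⟩ := h'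
  rcases lt_trichotomy m k with hc | hc | hc
  · have := hk m hc; omega
  · subst hc; omega
  · have := hm k hc; omega

lemma seqlt_of_lt_of_not_lt {x y d : ℕ → ℕ} (hx : SeqLt x d) (hy : ¬ SeqLt y d) :
    SeqLt x y := by
  obtain ⟨m, hm, hm'⟩ := hx
  by_cases hall : ∀ j ≤ m, y j = d j
  · exact ⟨m, fun i hi => (hm i hi).trans (hall i hi.le).symm,
      by rw [hall m le_rfl]; exact hm'⟩
  · push_neg at hall
    obtain ⟨k, hk, hkne⟩ := hall
    have hex : ∃ k, y k ≠ d k := ⟨k, hkne⟩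
    have hKne : y (Nat.find hex) ≠ d (Nat.find hex) := Nat.find_spec hex
    have hKeq : ∀ j < Nat.find hex, y j = d j := by
      intro j hj
      by_contra hc
      exact Nat.find_min hex hj hc
    have hKle : Nat.find hex ≤ m := (Nat.find_min' hex hkne).trans hk
    have hKgt : d (Nat.find hex) < y (Nat.find hex) := by
      rcases lt_or_gt_of_ne hKne with h | h
      · exact absurd ⟨Nat.find hex, hKeq, h⟩ hy
      · exact h
    refine ⟨Nat.find hex, fun i hi => (hm i (lt_of_lt_of_le hi hKle)).trans (hKeq i hi).symm, ?_⟩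
    rcases lt_or_eq_of_le hKle with h | h
    · rw [hm _ h]; exact hKgt
    · rw [h] at hKgt ⊢; exact hm'.trans hKgt

/-- If `σ^{n₀}(d̄) ≥ d` then every `ω` with `σⁿ(ω) < d` and `σⁿ(ω̄) < d` for all `n ≥ 0`
satisfies `ω_{n+1}⋯ω_{n+n₀} < d₁⋯d_{n₀}` for all `n ≥ 0` (digits are 0-indexed: `d i = d_{i+1}`). -/
theorem stmt13 (α : ℕ) (hα : 1 ≤ α) (d : ℕ → ℕ) (hd : ∀ i, d i ≤ α)
    (n₀ : ℕ) (hn₀ : 1 ≤ n₀) (h1 : ¬ SeqLt (shift n₀ (refl' α d)) d)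
    (ω : ℕ → ℕ) (hω : ∀ i, ω i ≤ α)
    (h2 : ∀ n, SeqLt (shift n ω) d) (h3 : ∀ n, SeqLt (shift n (refl' α ω)) d) :
    ∀ n, ∃ i < n₀, (∀ j < i, ω (n + j) = d j) ∧ ω (n + i) < d i := by
  intro n
  obtain ⟨m, hm, hm'⟩ := h2 n
  by_cases hmn : m < n₀
  · exact ⟨m, hmn, fun j hj => hm j hj, hm'⟩
  · push_neg at hmn
    exfalso
    have heq : ∀ j < n₀, ω (n + j) = d j := fun j hj => hm j (hj.trans_le hmn)
    have hx : SeqLt (shift (n + n₀) (refl' α ω)) (shift n₀ (refl' α d)) :=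
      seqlt_of_lt_of_not_lt (h3 (n + n₀)) h1
    obtain ⟨k, hk, hk'⟩ := hx
    have key : SeqLt d (shift n ω) := by
      refine ⟨n₀ + k, ?_, ?_⟩
      · intro i hi
        simp only [shift]
        by_cases hcase : i < n₀
        · exact (heq i hcase).symm
        · push_neg at hcase
          have hik : i - n₀ < k := by omega
          have h5 := hk (i - n₀) hik
          simp only [shift, refl'] at h5
          have e1 : n + n₀ + (i - n₀) = n + i := by omega
          have e2 : n₀ + (i - n₀) = i := by omega
          rw [e1, e2] at h5
          have h6 := hω (n + i)
          have h7 := hd i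
          omega
      · simp only [shift, refl'] at hk' ⊢
        have h6 := hω (n + n₀ + k)
        have h7 := hd (n₀ + k)
        have e : n + n₀ + k = n + (n₀ + k) := by omega
        rw [e] at hk' h6
        omega
    exact seqlt_asymm (h2 n) key
end

section
/- Let d ∈ {0,...,α}^ℕ satisfy σ^n(d̄) < d for all n ∈ ℕ and limsup_{n→∞} σ^n(d̄) = d (meaning the run lengths t_n := max{j : d̄_{n+1}⋯d̄_{n+j} = d₁⋯d_j} satisfy limsup t_n = ∞). Define recursively l₁ = 1 and, for k ≥ 1: n_k = min{n ≥ 0 : d̄_{n+1}⋯d̄_{n+l_k} = d₁⋯d_{l_k}}, m_k = n_k + min{i ≥ 1 : d̄_{n_k+i} < d_i}, l_{k+1} = max{t_n : n ≤ m_k} + 1. Then (m_k) is well-defined, strictly increasing, and d_{m_k} > 0 for every k. -/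
open Classical in
/-- run length `t n` -/
noncomputable def tAux (α : ℕ) (d : ℕ → ℕ) (n : ℕ) : ℕ :=
  if h : ∃ i, α - d (n + i) ≠ d i then Nat.find h else 0

open Classical in
/-- `n_k` as a function of `l_k` -/
noncomputable def NAux (α : ℕ) (d : ℕ → ℕ) (L : ℕ) : ℕ :=
  if h : ∃ n, ∀ i < L, α - d (n + i) = d i then Nat.find h else 0

open Classical in
/-- `j_k` as a function of `l_k` -/
noncomputable def JAux (α : ℕ) (d : ℕ → ℕ) (L : ℕ) : ℕ :=
  if h : ∃ j, α - d (NAux α d L + j) < d j then Nat.find h else 0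

/-- `m_k` as a function of `l_k` -/
noncomputable def MAux (α : ℕ) (d : ℕ → ℕ) (L : ℕ) : ℕ :=
  NAux α d L + JAux α d L + 1

/-- `l_{k+1}` as a function of `l_k` -/
noncomputable def FAux (α : ℕ) (d : ℕ → ℕ) (L : ℕ) : ℕ :=
  (Finset.Icc 1 (MAux α d L)).sup (tAux α d) + 1

/-- the sequence `l_k` -/
noncomputable def llAux (α : ℕ) (d : ℕ → ℕ) : ℕ → ℕ
  | 0 => 1
  | 1 => 1
  | (k + 2) => FAux α d (llAux α d (k + 1))

/-- Construction of the `d`-positive sequence `(m_k)` in the critical case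
`σⁿ(d̄) < d` for all `n ≥ 1` but `limsup σⁿ(d̄) = d` (run lengths `t_n` unbounded).
Digits are 0-indexed: `d i = d_{i+1}`, so `d̄_{n+1}⋯d_{n+j} = d₁⋯d_j` reads
`∀ i < j, α - d (n+i) = d i`, and `d_{m_k} > 0` reads `0 < d (m_k - 1)`.
The run lengths `t`, the minima `n_k`, the auxiliary minima `j_k`
(`m_k = n_k + j_k + 1`, where `j_k + 1 = min{i ≥ 1 : d̄_{n_k+i} < d_i}`) and the
lengths `l_k` are asserted to exist (well-definedness), with `(m_k)_{k≥1}` strictly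
increasing and `d_{m_k} > 0`. -/
theorem stmt18 (α : ℕ) (hα : 1 ≤ α) (d : ℕ → ℕ) (hd : ∀ i, d i ≤ α)
    (hlt : ∀ n, 1 ≤ n → SeqLt (shift n (fun i => α - d i)) d)
    (hsup : ∀ B : ℕ, ∃ n, 1 ≤ n ∧ ∀ i < B, α - d (n + i) = d i) :
    ∃ t nn jj mm ll : ℕ → ℕ,
      -- `t n` = run length: the largest `j` with `d̄_{n+1}⋯d_{n+j} = d₁⋯d_j`
      (∀ n, 1 ≤ n → (∀ i < t n, α - d (n + i) = d i) ∧ α - d (n + t n) ≠ d (t n)) ∧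
      -- `l₁ = 1`
      ll 1 = 1 ∧
      (∀ k, 1 ≤ k →
        -- `n_k = min{n ≥ 0 : d̄_{n+1}⋯d_{n+l_k} = d₁⋯d_{l_k}}`
        ((∀ i < ll k, α - d (nn k + i) = d i) ∧
          (∀ n < nn k, ¬ ∀ i < ll k, α - d (n + i) = d i)) ∧
        -- `m_k = n_k + min{i ≥ 1 : d̄_{n_k+i} < d_i}`
        (mm k = nn k + jj k + 1 ∧ α - d (nn k + jj k) < d (jj k) ∧
          (∀ j < jj k, ¬ α - d (nn k + j) < d j)) ∧
        -- `l_{k+1} = max{t_n : n ≤ m_k} + 1`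
        ((∀ n, 1 ≤ n → n ≤ mm k → t n + 1 ≤ ll (k + 1)) ∧
          (∃ n, 1 ≤ n ∧ n ≤ mm k ∧ ll (k + 1) = t n + 1))) ∧
      -- conclusions: `(m_k)` strictly increasing and `d_{m_k} > 0`
      (∀ k, 1 ≤ k → mm k < mm (k + 1)) ∧
      (∀ k, 1 ≤ k → 0 < d (mm k - 1)) := by
  classical
  -- unpack `hlt` into a concrete form
  have hlt' : ∀ n, 1 ≤ n → ∃ m, (∀ i < m, α - d (n + i) = d i) ∧ α - d (n + m) < d m := by
    intro n hn
    obtain ⟨m, h1, h2⟩ := hlt n hn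
    exact ⟨m, fun i hi => h1 i hi, h2⟩
  -- `d̄_1 ≠ d_1` (otherwise `d` is constant `α/2`, contradicting `hlt`)
  have hZ : α - d 0 ≠ d 0 := by
    intro h0
    have hA : ∀ s, 1 ≤ s → α - d s ≤ d 0 := by
      intro s hs
      obtain ⟨m, heq, hm⟩ := hlt' s hs
      rcases Nat.eq_zero_or_pos m with hm0 | hm0
      · subst hm0; simp only [Nat.add_zero] at hm; omega
      · have := heq 0 hm0; simp only [Nat.add_zero] at this; omega
    have hB : ∀ i, d i ≤ d 0 := by
      intro i
      obtain ⟨n, hn1, hn2⟩ := hsup (i + 1)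
      have h1 := hn2 i (Nat.lt_succ_self i)
      have h2 := hA (n + i) (by omega)
      omega
    have hC : ∀ s, 1 ≤ s → d 0 ≤ d s := by
      intro s hs
      have h1 := hA s hs
      have h2 := hd s
      have h3 := hd 0
      omega
    obtain ⟨m, heq, hm⟩ := hlt' 1 le_rfl
    have h1 := hB m
    have h2 := hB (1 + m)
    have h3 := hC (1 + m) (by omega)
    have h4 := hd 0
    omega
  -- existence underlying `t`
  have hT : ∀ n, 1 ≤ n → ∃ i, α - d (n + i) ≠ d i := by
    intro n hn
    obtain ⟨m, _, hm⟩ := hlt' n hn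
    exact ⟨m, by omega⟩
  have tspec : ∀ n, 1 ≤ n →
      (∀ i < tAux α d n, α - d (n + i) = d i) ∧ α - d (n + tAux α d n) ≠ d (tAux α d n) := by
    intro n hn
    unfold tAux
    split
    · rename_i h
      refine ⟨fun i hi => ?_, Nat.find_spec h⟩
      have := Nat.find_min h hi
      omega
    · rename_i h
      exact absurd (hT n hn) h
  -- existence underlying `NAux`
  have hNex : ∀ L, ∃ n, ∀ i < L, α - d (n + i) = d i := by
    intro L
    obtain ⟨n, _, hn⟩ := hsup L
    exact ⟨n, hn⟩
  have Nspec : ∀ L, (∀ i < L, α - d (NAux α d L + i) = d i) ∧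
      (∀ n < NAux α d L, ¬ ∀ i < L, α - d (n + i) = d i) := by
    intro L
    unfold NAux
    split
    · rename_i h
      exact ⟨Nat.find_spec h, fun n hn => Nat.find_min h hn⟩
    · rename_i h
      exact absurd (hNex L) h
  have hN1 : ∀ L, 1 ≤ L → 1 ≤ NAux α d L := by
    intro L hL
    by_contra h
    have h0 : NAux α d L = 0 := by omega
    have := (Nspec L).1 0 (by omega)
    rw [h0] at this
    simp at this
    exact hZ this
  -- existence underlying `JAux`
  have hJex : ∀ L, 1 ≤ L → ∃ j, α - d (NAux α d L + j) < d j := by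
    intro L hL
    obtain ⟨m, _, hm⟩ := hlt' (NAux α d L) (hN1 L hL)
    exact ⟨m, hm⟩
  have Jspec : ∀ L, 1 ≤ L → α - d (NAux α d L + JAux α d L) < d (JAux α d L) ∧
      (∀ j < JAux α d L, ¬ α - d (NAux α d L + j) < d j) := by
    intro L hL
    unfold JAux
    split
    · rename_i h
      exact ⟨Nat.find_spec h, fun j hj => Nat.find_min h hj⟩
    · rename_i h
      exact absurd (hJex L hL) h
  -- basic facts about `llAux`
  have hll1 : ∀ k, 1 ≤ llAux α d k := by
    intro k
    match k with
    | 0 => simp [llAux]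
    | 1 => simp [llAux]
    | (k + 2) => simp [llAux, FAux]
  have llsucc : ∀ k, 1 ≤ k → llAux α d (k + 1) = FAux α d (llAux α d k) := by
    intro k hk
    match k, hk with
    | (k + 1), _ => rfl
  refine ⟨tAux α d, fun k => NAux α d (llAux α d k), fun k => JAux α d (llAux α d k),
    fun k => MAux α d (llAux α d k), llAux α d, tspec, rfl, ?_, ?_, ?_⟩
  · intro k hk
    refine ⟨Nspec (llAux α d k), ⟨rfl, Jspec (llAux α d k) (hll1 k)⟩, ?_⟩
    rw [llsucc k hk]
    constructor
    · intro n hn1 hn2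
      have : tAux α d n ≤ (Finset.Icc 1 (MAux α d (llAux α d k))).sup (tAux α d) :=
        Finset.le_sup (Finset.mem_Icc.mpr ⟨hn1, hn2⟩)
      unfold FAux
      omega
    · have hne : (Finset.Icc 1 (MAux α d (llAux α d k))).Nonempty := by
        refine ⟨1, Finset.mem_Icc.mpr ⟨le_rfl, ?_⟩⟩
        unfold MAux
        omega
      obtain ⟨b, hb, hbs⟩ := Finset.exists_mem_eq_sup _ hne (tAux α d)
      rw [Finset.mem_Icc] at hb
      exact ⟨b, hb.1, hb.2, by unfold FAux; omega⟩
  · -- strict monotonicity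
    intro k hk
    have hL'eq : llAux α d (k + 1) = FAux α d (llAux α d k) := llsucc k hk
    show MAux α d (llAux α d k) < MAux α d (llAux α d (k + 1))
    have key : MAux α d (llAux α d k) < NAux α d (llAux α d (k + 1)) := by
      by_contra h
      push_neg at h
      have h1 : 1 ≤ NAux α d (llAux α d (k + 1)) := hN1 _ (hll1 (k + 1))
      have h2 : tAux α d (NAux α d (llAux α d (k + 1))) ≤
          (Finset.Icc 1 (MAux α d (llAux α d k))).sup (tAux α d) :=
        Finset.le_sup (Finset.mem_Icc.mpr ⟨h1, h⟩)
      have h3 : tAux α d (NAux α d (llAux α d (k + 1))) < FAux α d (llAux α d k) := by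
        unfold FAux; omega
      have h4 := (Nspec (llAux α d (k + 1))).1 (tAux α d (NAux α d (llAux α d (k + 1))))
        (lt_of_lt_of_eq h3 hL'eq.symm)
      exact (tspec (NAux α d (llAux α d (k + 1))) h1).2 h4
    unfold MAux at key ⊢
    omega
  · -- positivity
    intro k hk
    have h1 := (Jspec (llAux α d k) (hll1 k)).1
    have h2 := hd (JAux α d (llAux α d k))
    show 0 < d (MAux α d (llAux α d k) - 1)
    unfold MAux
    have : 0 < d (NAux α d (llAux α d k) + JAux α d (llAux α d k)) := by omega
    simpa using this
end
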